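/- arXiv:2204.00653 — 4 statements merged into one kernel-verified Lean document; each statement's English description precedes it below -/
import Mathlib

section
/- Let h : ℝ → ℝ be continuously differentiable on [0, T) with h(0) ≥ 0, and suppose there exists a locally Lipschitz, strictly increasing continuous function α : ℝ → ℝ with α(0) = 0 such that h'(t) ≥ -α(h(t)) for all t ∈ [0, T). Then h(t) ≥ 0 for all t ∈ [0, T). -/
theorem stmt_3 (T : ℝ) (hT : 0 < T) (h h' : ℝ → ℝ) (α : ℝ → ℝ)
    (hderiv : ∀ t ∈ Set.Ico (0:ℝ) T, HasDerivAt h (h' t) t)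
    (hcont : ContinuousOn h' (Set.Ico (0:ℝ) T))
    (hαlip : LocallyLipschitz α) (hαmono : StrictMono α)
    (hαcont : Continuous α) (hα0 : α 0 = 0)
    (hineq : ∀ t ∈ Set.Ico (0:ℝ) T, h' t ≥ -α (h t))
    (h0 : 0 ≤ h 0) :
    ∀ t ∈ Set.Ico (0:ℝ) T, 0 ≤ h t := by
  by_contra hcon
  push_neg at hcon
  obtain ⟨t1, ht1, hneg⟩ := hcon
  obtain ⟨ht1ge, ht1lt⟩ := ht1
  set S : Set ℝ := Set.Icc 0 t1 ∩ h ⁻¹' Set.Ici 0 with hSdef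
  have hcontIcc : ContinuousOn h (Set.Icc 0 t1) := fun x hx =>
    ((hderiv x ⟨hx.1, lt_of_le_of_lt hx.2 ht1lt⟩).continuousAt).continuousWithinAt
  have hSclosed : IsClosed S :=
    hcontIcc.preimage_isClosed_of_isClosed isClosed_Icc isClosed_Ici
  have h0S : (0:ℝ) ∈ S := ⟨⟨le_rfl, ht1ge⟩, h0⟩
  have hbdd : BddAbove S := ⟨t1, fun x hx => hx.1.2⟩
  set t0 : ℝ := sSup S with ht0def
  have ht0S : t0 ∈ S := hSclosed.csSup_mem ⟨0, h0S⟩ hbdd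
  have ht0ge : 0 ≤ t0 := ht0S.1.1
  have ht0le : t0 ≤ t1 := ht0S.1.2
  have ht0h : 0 ≤ h t0 := ht0S.2
  have ht0lt : t0 < t1 := lt_of_le_of_ne ht0le (by
    intro he; rw [he] at ht0h; linarith)
  have hmono : StrictMonoOn h (Set.Icc t0 t1) := by
    apply strictMonoOn_of_deriv_pos (convex_Icc t0 t1)
      (hcontIcc.mono (Set.Icc_subset_Icc ht0ge le_rfl))
    intro x hx
    rw [interior_Icc] at hx
    have hxIco : x ∈ Set.Ico (0:ℝ) T := ⟨le_of_lt (lt_of_le_of_lt ht0ge hx.1),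
      lt_trans hx.2 ht1lt⟩
    have hxneg : h x < 0 := by
      by_contra hge
      push_neg at hge
      have : x ∈ S := ⟨⟨le_of_lt (lt_of_le_of_lt ht0ge hx.1), le_of_lt hx.2⟩, hge⟩
      have := le_csSup hbdd this
      linarith [hx.1]
    have hαneg : α (h x) < 0 := by
      have := hαmono hxneg
      rwa [hα0] at this
    have := hineq x hxIco
    rw [(hderiv x hxIco).deriv]
    linarith
  have := hmono ⟨le_rfl, le_of_lt ht0lt⟩ ⟨le_of_lt ht0lt, le_rfl⟩ ht0lt
  linarith
end

section
/- Let h₀ : ℝⁿ → ℝ and k₀ : ℝⁿ → ℝᵖ be continuously differentiable, μ > 0, and h(x,ξ) = h₀(x) - (1/(2μ))‖ξ - k₀(x)‖². Suppose ∇h₀(x) ≠ 0 whenever h₀(x) = 0. Then for every (x,ξ) with h(x,ξ) = 0, the full gradient of h at (x,ξ) is nonzero. -/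
/-!
Write `h(x, ξ) = h₀ x - c ‖ξ - k₀ x‖²`. Its derivative in a direction `(u, Dk₀ u)` tangent to the
graph of `k₀` is `Dh₀ u`, and in the direction `(0, ξ - k₀ x)` it is `-2c ‖ξ - k₀ x‖²`. So at a
critical point `Dh₀ x = 0` and the penalty term vanishes; if moreover `h(x, ξ) = 0`, then
`h₀ x = 0`, contradicting the regularity of `h₀` on its zero set.
-/

open ContinuousLinearMap

section CompositeBarrier

variable {E F : Type*} [NormedAddCommGroup E] [NormedSpace ℝ E]
  [NormedAddCommGroup F] [InnerProductSpace ℝ F]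

def compositeBarrier (f : E → ℝ) (g : E → F) (c : ℝ) (q : E × F) : ℝ :=
  f q.1 - c * ‖q.2 - g q.1‖ ^ 2

theorem hasFDerivAt_compositeBarrier {f : E → ℝ} {g : E → F} {f' : E →L[ℝ] ℝ}
    {g' : E →L[ℝ] F} {x : E} (ξ : F) (c : ℝ) (hf : HasFDerivAt f f' x)
    (hg : HasFDerivAt g g' x) :
    HasFDerivAt (compositeBarrier f g c)
      (f'.comp (fst ℝ E F) -
        c • (2 • innerSL ℝ (ξ - g x)).comp (snd ℝ E F - g'.comp (fst ℝ E F))) (x, ξ) :=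
  (hf.comp (x, ξ) hasFDerivAt_fst).sub
    (((hasFDerivAt_snd).sub (hg.comp (x, ξ) hasFDerivAt_fst)).norm_sq.const_mul c)

theorem eq_zero_of_fst_comp_sub_smul_innerSL_comp_eq_zero {f' : E →L[ℝ] ℝ}
    {g' : E →L[ℝ] F} {c : ℝ} {w : F}
    (hL : f'.comp (fst ℝ E F) -
      c • (2 • innerSL ℝ w).comp (snd ℝ E F - g'.comp (fst ℝ E F)) = 0) :
    f' = 0 ∧ (c = 0 ∨ w = 0) := by
  refine ⟨?_, by simpa using congr($hL (0, w))⟩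
  ext u
  simpa using congr($hL (u, g' u))

theorem fderiv_compositeBarrier_ne_zero {f : E → ℝ} {g : E → F} {c : ℝ} {x : E} {ξ : F}
    (hf : DifferentiableAt ℝ f x) (hg : DifferentiableAt ℝ g x)
    (hregular : f x = 0 → fderiv ℝ f x ≠ 0) (hzero : compositeBarrier f g c (x, ξ) = 0) :
    fderiv ℝ (compositeBarrier f g c) (x, ξ) ≠ 0 := by
  intro hcrit
  rw [(hasFDerivAt_compositeBarrier ξ c hf.hasFDerivAt hg.hasFDerivAt).fderiv] at hcrit
  obtain ⟨hf', hpenalty⟩ := eq_zero_of_fst_comp_sub_smul_innerSL_comp_eq_zero hcrit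
  have hfx : f x = 0 := by
    rcases hpenalty with hc | hw
    · simpa [compositeBarrier, hc] using hzero
    · simpa [compositeBarrier, hw] using hzero
  exact hregular hfx hf'

end CompositeBarrier

theorem stmt_6_general (n p : ℕ)
    (h₀ : EuclideanSpace ℝ (Fin n) → ℝ)
    (k₀ : EuclideanSpace ℝ (Fin n) → EuclideanSpace ℝ (Fin p))
    (hh₀ : ContDiff ℝ 1 h₀) (hk₀ : ContDiff ℝ 1 k₀)
    (μ : ℝ)
    (h : EuclideanSpace ℝ (Fin n) × EuclideanSpace ℝ (Fin p) → ℝ)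
    (hdef : ∀ x ξ, h (x, ξ) = h₀ x - (1 / (2 * μ)) * ‖ξ - k₀ x‖ ^ 2)
    (hgrad : ∀ x, h₀ x = 0 → gradient h₀ x ≠ 0) :
    ∀ x ξ, h (x, ξ) = 0 → fderiv ℝ h (x, ξ) ≠ 0 := by
  intro x ξ hzero
  have hh : h = compositeBarrier h₀ k₀ (1 / (2 * μ)) := funext fun q => hdef q.1 q.2
  subst hh
  refine fderiv_compositeBarrier_ne_zero (hh₀.differentiable one_ne_zero x)
    (hk₀.differentiable one_ne_zero x) (fun hx hf' => hgrad x hx ?_) hzero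
  rw [gradient, hf', map_zero]

theorem stmt_6 (n p : ℕ)
    (h₀ : EuclideanSpace ℝ (Fin n) → ℝ)
    (k₀ : EuclideanSpace ℝ (Fin n) → EuclideanSpace ℝ (Fin p))
    (hh₀ : ContDiff ℝ 1 h₀) (hk₀ : ContDiff ℝ 1 k₀)
    (μ : ℝ) (hμ : 0 < μ)
    (h : EuclideanSpace ℝ (Fin n) × EuclideanSpace ℝ (Fin p) → ℝ)
    (hdef : ∀ x ξ, h (x, ξ) = h₀ x - (1 / (2 * μ)) * ‖ξ - k₀ x‖ ^ 2)
    (hgrad : ∀ x, h₀ x = 0 → gradient h₀ x ≠ 0) :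
    ∀ x ξ, h (x, ξ) = 0 → fderiv ℝ h (x, ξ) ≠ 0 :=
  stmt_6_general n p h₀ k₀ hh₀ hk₀ μ h hdef hgrad
end

section
/- Let f₀ : ℝⁿ → ℝⁿ, g₀ : ℝⁿ → ℝⁿˣᵖ, h₀ : ℝⁿ → ℝ, and k₀ : ℝⁿ → ℝᵖ be twice continuously differentiable, α₀ : ℝ → ℝ globally L-Lipschitz, μ > 0, λ ≥ L. Suppose ∇h₀(x)ᵀ(f₀(x) + g₀(x)k₀(x)) ≥ -α₀(h₀(x)) for all x. Define h(x,ξ) = h₀(x) - (1/(2μ))‖ξ - k₀(x)‖². Then for the dynamics ẋ = f₀(x) + g₀(x)ξ, ξ̇ = u with u = Dk₀(x)(f₀(x)+g₀(x)ξ) + μ g₀(x)ᵀ∇h₀(x) - (λ/2)(ξ - k₀(x)), the time derivative of h along the dynamics satisfies ḣ(x,ξ) ≥ -α₀(h(x,ξ)) for all (x,ξ). -/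
open RealInnerProductSpace

theorem stmt_7 (n p : ℕ)
    (f₀ : EuclideanSpace ℝ (Fin n) → EuclideanSpace ℝ (Fin n))
    (g₀ : EuclideanSpace ℝ (Fin n) →
      (EuclideanSpace ℝ (Fin p) →L[ℝ] EuclideanSpace ℝ (Fin n)))
    (h₀ : EuclideanSpace ℝ (Fin n) → ℝ)
    (k₀ : EuclideanSpace ℝ (Fin n) → EuclideanSpace ℝ (Fin p))
    (hf₀ : ContDiff ℝ 2 f₀) (hg₀ : ContDiff ℝ 2 g₀)
    (hh₀ : ContDiff ℝ 2 h₀) (hk₀ : ContDiff ℝ 2 k₀)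
    (α₀ : ℝ → ℝ) (L : ℝ)
    (hlip : ∀ a b, |α₀ a - α₀ b| ≤ L * |a - b|)
    (μ lam : ℝ) (hμ : 0 < μ) (hlam : L ≤ lam)
    (hsafe : ∀ x, ⟪gradient h₀ x, f₀ x + g₀ x (k₀ x)⟫ ≥ -α₀ (h₀ x))
    (h : EuclideanSpace ℝ (Fin n) → EuclideanSpace ℝ (Fin p) → ℝ)
    (hdef : ∀ x ξ, h x ξ = h₀ x - (1 / (2 * μ)) * ‖ξ - k₀ x‖ ^ 2)
    (u : EuclideanSpace ℝ (Fin n) → EuclideanSpace ℝ (Fin p) →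
      EuclideanSpace ℝ (Fin p))
    (hu : ∀ x ξ, u x ξ = fderiv ℝ k₀ x (f₀ x + g₀ x ξ)
        + μ • (ContinuousLinearMap.adjoint (g₀ x)) (gradient h₀ x)
        - (lam / 2) • (ξ - k₀ x))
    (hdot : EuclideanSpace ℝ (Fin n) → EuclideanSpace ℝ (Fin p) → ℝ)
    (hdotdef : ∀ x ξ, hdot x ξ =
      ⟪gradient h₀ x, f₀ x + g₀ x ξ⟫
        - (1 / μ) * ⟪ξ - k₀ x, u x ξ - fderiv ℝ k₀ x (f₀ x + g₀ x ξ)⟫) :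
    ∀ x ξ, hdot x ξ ≥ -α₀ (h x ξ) := by
  intro x ξ
  set e := ξ - k₀ x with he
  set G := gradient h₀ x with hG
  have hcancel : u x ξ - fderiv ℝ k₀ x (f₀ x + g₀ x ξ)
      = μ • (ContinuousLinearMap.adjoint (g₀ x)) G - (lam / 2) • e := by
    rw [hu]; abel
  have hadj : ⟪e, (ContinuousLinearMap.adjoint (g₀ x)) G⟫ = ⟪G, g₀ x e⟫ := by
    rw [real_inner_comm, ContinuousLinearMap.adjoint_inner_left]
  have hsplit : g₀ x ξ = g₀ x (k₀ x) + g₀ x e := by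
    rw [← map_add]; congr 1; rw [he]; abel
  have key : hdot x ξ = ⟪G, f₀ x + g₀ x (k₀ x)⟫ + (lam / (2 * μ)) * ‖e‖ ^ 2 := by
    rw [hdotdef, hcancel, inner_sub_right, inner_smul_right, inner_smul_right,
      real_inner_self_eq_norm_sq, hsplit]
    rw [show f₀ x + (g₀ x (k₀ x) + g₀ x e) = (f₀ x + g₀ x (k₀ x)) + g₀ x e by abel,
      inner_add_right, hadj]
    field_simp
    ring
  have hlipb : -α₀ (h x ξ) ≤ -α₀ (h₀ x) + L * ((1 / (2 * μ)) * ‖e‖ ^ 2) := by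
    have h1 := hlip (h₀ x) (h x ξ)
    have h2 : |h₀ x - h x ξ| = (1 / (2 * μ)) * ‖e‖ ^ 2 := by
      rw [hdef, he]
      have : (0:ℝ) ≤ (1 / (2 * μ)) * ‖ξ - k₀ x‖ ^ 2 := by positivity
      rw [show h₀ x - (h₀ x - 1 / (2 * μ) * ‖ξ - k₀ x‖ ^ 2)
          = 1 / (2 * μ) * ‖ξ - k₀ x‖ ^ 2 by ring, abs_of_nonneg this]
    have := abs_le.mp (h2 ▸ h1) |>.2
    linarith
  have hs := hsafe x
  have hLlam : L * ((1 / (2 * μ)) * ‖e‖ ^ 2) ≤ lam / (2 * μ) * ‖e‖ ^ 2 := by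
    have h0 : (0:ℝ) ≤ (1 / (2 * μ)) * ‖e‖ ^ 2 := by positivity
    have := mul_le_mul_of_nonneg_right hlam h0
    calc L * ((1 / (2 * μ)) * ‖e‖ ^ 2) ≤ lam * ((1 / (2 * μ)) * ‖e‖ ^ 2) := this
      _ = lam / (2 * μ) * ‖e‖ ^ 2 := by ring
  rw [key]
  linarith
end

section
/- Suppose for each i = 1,…,r we have e_i ≥ 0, μ_i > 0, λ_i ≥ L, and α₀ : ℝ → ℝ is L-Lipschitz. If D ≥ -α₀(h₀) + Σ_{i=1}^r (λ_i/(2μ_i)) e_i and h = h₀ - Σ_{i=1}^r e_i/(2μ_i), then D ≥ -α₀(h). -/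
theorem stmt_16 (r : ℕ) (e μ lam : Fin r → ℝ) (L : ℝ) (α₀ : ℝ → ℝ)
    (he : ∀ i, 0 ≤ e i) (hμ : ∀ i, 0 < μ i) (hlam : ∀ i, L ≤ lam i)
    (hlip : ∀ a b, |α₀ a - α₀ b| ≤ L * |a - b|)
    (h₀ D : ℝ)
    (hD : D ≥ -α₀ h₀ + ∑ i, (lam i / (2 * μ i)) * e i) :
    D ≥ -α₀ (h₀ - ∑ i, e i / (2 * μ i)) := by
  set S := ∑ i, e i / (2 * μ i) with hS
  have hS0 : 0 ≤ S := Finset.sum_nonneg fun i _ => by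
    exact div_nonneg (he i) (by linarith [hμ i])
  have h1 : L * S ≤ ∑ i, (lam i / (2 * μ i)) * e i := by
    rw [hS, Finset.mul_sum]
    apply Finset.sum_le_sum
    intro i _
    have hμi := hμ i
    have heq : L * (e i / (2 * μ i)) = (L / (2 * μ i)) * e i := by
      field_simp
    rw [heq]
    exact mul_le_mul_of_nonneg_right
      (div_le_div_of_nonneg_right (hlam i) (by positivity)) (he i)
  have h2 : α₀ h₀ - α₀ (h₀ - S) ≤ L * S := by
    have hl := hlip h₀ (h₀ - S)
    have habs : |h₀ - (h₀ - S)| = S := by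
      rw [abs_of_nonneg] <;> simp [hS0]
    rw [habs] at hl
    exact (le_abs_self _).trans hl
  linarith
end
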